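/- For positive semidefinite real matrices A and B, d_*(A,B) = 0 if and only if A = B, where d_* is the Bures-Wasserstein distance. -/

import Mathlib

/-!
Write `S = √A`, `T = √B` and `X = T S`, so that `√A B √A = Xᴴ X`. Multiplying `X` by the
Moore–Penrose inverse of `|X| = √(Xᴴ X)` gives a partial isometry `W` with `Wᴴ X = |X|`, and then
`d_*(A, B)² = ‖S - T W‖² + ‖T - W Wᴴ T‖²` in the Frobenius norm. Hence `d_*(A, B)² ≥ 0`, and if it
vanishes then `A = S Sᴴ = T (W Wᴴ T) = T T = B`.
-/

open Matrix

open Classical in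
/-- The unique positive semidefinite square root of a PSD matrix (junk value `0` otherwise). -/
noncomputable def msqrt {p : ℕ} (M : Matrix (Fin p) (Fin p) ℝ) : Matrix (Fin p) (Fin p) ℝ :=
  if h : M.PosSemidef then (h.1.eigenvectorUnitary : Matrix (Fin p) (Fin p) ℝ) *
    diagonal ((↑) ∘ (√·) ∘ h.1.eigenvalues) * (star h.1.eigenvectorUnitary : Matrix (Fin p) (Fin p) ℝ)
  else 0

/-- Squared Bures-Wasserstein distance. -/
noncomputable def BWsq {p : ℕ} (A B : Matrix (Fin p) (Fin p) ℝ) : ℝ :=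
  A.trace - 2 * (msqrt (msqrt A * B * msqrt A)).trace + B.trace

open scoped MatrixOrder ComplexOrder

namespace Matrix

variable {𝕜 : Type*} [RCLike 𝕜] {m n : Type*} [Fintype m] [Fintype n] [DecidableEq n]

theorem exists_partialIsometry_conjTranspose_mul_eq_sqrt (X : Matrix m n 𝕜) :
    ∃ W : Matrix m n 𝕜, W * Wᴴ * W = W ∧ Wᴴ * X = CFC.sqrt (Xᴴ * X) := by
  set P := CFC.sqrt (Xᴴ * X)
  have hP : P * P = Xᴴ * X :=
    CFC.sqrt_mul_sqrt_self _ (posSemidef_conjTranspose_mul_self X).nonneg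
  -- `(0 : ℝ)⁻¹ = 0` makes `P'` the Moore–Penrose inverse of `P`
  set P' := cfc (·⁻¹ : ℝ → ℝ) P
  have hcont (f : ℝ → ℝ) : ContinuousOn f (spectrum ℝ P) := P.finite_real_spectrum.continuousOn f
  have hP'PP : P' * P * P = P := by
    rw [← cfc_id' ℝ P, ← cfc_mul _ _ P (hcont _) (hcont _), ← cfc_mul _ _ P (hcont _) (hcont _)]
    exact cfc_congr fun x _ => inv_mul_mul_self x
  have hP'PP' : P' * P * P' = P' := by
    rw [← cfc_id' ℝ P, ← cfc_mul _ _ P (hcont _) (hcont _), ← cfc_mul _ _ P (hcont _) (hcont _)]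
    exact cfc_congr fun x _ => by simpa using mul_inv_mul_cancel x⁻¹
  have hP'H : P'ᴴ = P' := (cfc_predicate _ P : IsSelfAdjoint P')
  have hW : (X * P')ᴴ * X = P := by
    rw [conjTranspose_mul, hP'H, Matrix.mul_assoc, ← hP, ← Matrix.mul_assoc, hP'PP]
  refine ⟨X * P', ?_, hW⟩
  rw [Matrix.mul_assoc, ← Matrix.mul_assoc _ X, hW, Matrix.mul_assoc, ← Matrix.mul_assoc P', hP'PP']

theorem trace_mul_self_add_trace_mul_self_sub_eq {S T W : Matrix n n ℝ} (hS : S.IsHermitian)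
    (hT : T.IsHermitian) (hW : W * Wᴴ * W = W) :
    (S * S).trace + (T * T).trace - 2 * (Wᴴ * (T * S)).trace =
      ((S - T * W)ᴴ * (S - T * W)).trace + ((T - W * Wᴴ * T)ᴴ * (T - W * Wᴴ * T)).trace := by
  have hG : (S - T * W)ᴴ * (S - T * W) =
      S * S - (Wᴴ * (T * S))ᴴ - Wᴴ * (T * S) + Wᴴ * (T * T) * W := by
    simp only [conjTranspose_sub, conjTranspose_mul, conjTranspose_conjTranspose, hS.eq, hT.eq]
    noncomm_ring
  have hK : (T - W * Wᴴ * T)ᴴ * (T - W * Wᴴ * T) = T * T - T * (W * Wᴴ) * T := by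
    have hQ : W * Wᴴ * (W * Wᴴ) = W * Wᴴ := by rw [← Matrix.mul_assoc, hW]
    simp only [conjTranspose_sub, conjTranspose_mul, conjTranspose_conjTranspose, hT.eq]
    calc (T - T * (W * Wᴴ)) * (T - W * Wᴴ * T)
        = T * T - 2 • (T * (W * Wᴴ) * T) + T * (W * Wᴴ * (W * Wᴴ)) * T := by noncomm_ring
      _ = T * T - T * (W * Wᴴ) * T := by rw [hQ]; abel
  have hcyc : (T * (W * Wᴴ) * T).trace = (Wᴴ * (T * T) * W).trace := by
    rw [trace_mul_cycle, ← Matrix.mul_assoc, trace_mul_cycle, Matrix.mul_assoc]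
  rw [hG, hK, trace_add, trace_sub, trace_sub, trace_sub, trace_conjTranspose, hcyc, star_trivial]
  ring

end Matrix

lemma msqrt_eq_cfcSqrt {p : ℕ} (M : Matrix (Fin p) (Fin p) ℝ) : msqrt M = CFC.sqrt M := by
  by_cases h : M.PosSemidef
  · rw [msqrt, dif_pos h, CFC.sqrt_eq_cfc, cfc_nnreal_eq_real _ M, h.1.cfc_eq, IsHermitian.cfc]
    congr 3
    funext i
    simp [Real.coe_sqrt, h.eigenvalues_nonneg i]
  · rw [msqrt, dif_neg h, CFC.sqrt_eq_cfc, cfc_apply_of_not_predicate]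
    rwa [nonneg_iff_posSemidef]

variable {p : ℕ} {A B : Matrix (Fin p) (Fin p) ℝ}

theorem exists_BWsq_eq_trace_add_trace (hA : A.PosSemidef) (hB : B.PosSemidef) :
    ∃ G K : Matrix (Fin p) (Fin p) ℝ,
      BWsq A B = (Gᴴ * G).trace + (Kᴴ * K).trace ∧ (G = 0 → K = 0 → A = B) := by
  set S := CFC.sqrt A
  set T := CFC.sqrt B
  have hS : S.IsHermitian := (CFC.sqrt_nonneg A).posSemidef.isHermitian
  have hT : T.IsHermitian := (CFC.sqrt_nonneg B).posSemidef.isHermitian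
  have hSS : S * S = A := CFC.sqrt_mul_sqrt_self A hA.nonneg
  have hTT : T * T = B := CFC.sqrt_mul_sqrt_self B hB.nonneg
  have hX : (T * S)ᴴ * (T * S) = S * B * S := by
    rw [conjTranspose_mul, hS.eq, hT.eq, ← hTT]
    noncomm_ring
  obtain ⟨W, hW, hWX⟩ := (T * S).exists_partialIsometry_conjTranspose_mul_eq_sqrt
  refine ⟨S - T * W, T - W * Wᴴ * T, ?_, fun hG hK => ?_⟩
  · rw [BWsq, msqrt_eq_cfcSqrt, msqrt_eq_cfcSqrt, ← hX, ← hWX,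
      ← trace_mul_self_add_trace_mul_self_sub_eq hS hT hW, hSS, hTT]
    ring
  · rw [sub_eq_zero] at hG hK
    calc A = S * Sᴴ := by rw [hS.eq, hSS]
      _ = T * (W * Wᴴ * T) := by rw [hG, conjTranspose_mul, hT.eq]; noncomm_ring
      _ = B := by rw [← hK, hTT]

theorem BWsq_nonneg (hA : A.PosSemidef) (hB : B.PosSemidef) : 0 ≤ BWsq A B := by
  obtain ⟨G, K, hGK, -⟩ := exists_BWsq_eq_trace_add_trace hA hB
  rw [hGK]
  exact add_nonneg (posSemidef_conjTranspose_mul_self G).trace_nonneg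
    (posSemidef_conjTranspose_mul_self K).trace_nonneg

theorem eq_of_BWsq_eq_zero (hA : A.PosSemidef) (hB : B.PosSemidef) (h : BWsq A B = 0) :
    A = B := by
  obtain ⟨G, K, hGK, hAB⟩ := exists_BWsq_eq_trace_add_trace hA hB
  rw [hGK, add_eq_zero_iff_of_nonneg (posSemidef_conjTranspose_mul_self G).trace_nonneg
    (posSemidef_conjTranspose_mul_self K).trace_nonneg, trace_conjTranspose_mul_self_eq_zero_iff,
    trace_conjTranspose_mul_self_eq_zero_iff] at h
  exact hAB h.1 h.2

theorem BWsq_self (hA : A.PosSemidef) : BWsq A A = 0 := by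
  set S := CFC.sqrt A
  have hSAS : S * A * S = A * A := by
    rw [← CFC.sqrt_mul_sqrt_self A hA.nonneg]
    noncomm_ring
  rw [BWsq, msqrt_eq_cfcSqrt, msqrt_eq_cfcSqrt, hSAS, CFC.sqrt_mul_self A hA.nonneg]
  ring

/-- For positive semidefinite `A`, `B`: the Bures-Wasserstein distance is zero iff `A = B`. -/
theorem stmt14 {P : ℕ} (A B : Matrix (Fin P) (Fin P) ℝ)
    (hA : A.PosSemidef) (hB : B.PosSemidef) :
    Real.sqrt (BWsq A B) = 0 ↔ A = B := by
  constructor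
  · intro h
    exact eq_of_BWsq_eq_zero hA hB (le_antisymm (Real.sqrt_eq_zero'.mp h) (BWsq_nonneg hA hB))
  · rintro rfl
    rw [BWsq_self hA, Real.sqrt_zero]
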